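/- arXiv:1211.0873 — 3 statements merged into one kernel-verified Lean document; each statement's English description precedes it below -/
import Mathlib

section
/- A finite graph is chordal if and only if its vertices can be linearly ordered so that for each vertex v, the neighbours of v that precede v in the order form a clique (i.e., the graph admits a perfect elimination ordering). -/
/-- A graph is *chordal* if every cycle of length at least 4 has a chord,
i.e. an edge of the graph joining two vertices of the cycle that is not an
edge of the cycle itself. -/
def SimpleGraph.IsChordal {V : Type*} (G : SimpleGraph V) : Prop :=
  ∀ ⦃v : V⦄ (c : G.Walk v v), c.IsCycle → 4 ≤ c.length →
    ∃ a b : V, a ∈ c.support ∧ b ∈ c.support ∧ G.Adj a b ∧ s(a, b) ∉ c.edges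

/-!
A perfect elimination order makes every cycle chordal: on a cycle of length at least 4, the two
cycle-neighbours of the latest vertex precede it, hence are adjacent, and they are not consecutive
on the cycle.

Conversely (Dirac), in a chordal graph every inclusion-minimal `a`-`b` separator `S` is a clique:
two nonadjacent `x, y ∈ S` could be joined by shortest paths through the side of `a` and through
the side of `b`, and these would close up to a chordless cycle of length at least 4. By induction
on the number of vertices, every clique `K ≠ V` then misses a simplicial vertex: if `G` is not
complete, the induction hypothesis for the side of `a` together with `S` (taking `K := S`), and
likewise for `b`, gives a simplicial vertex on each side of `S`; these are nonadjacent, so they do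
not both lie in `K`. Placing a simplicial vertex last and ordering the rest of the graph
recursively gives a perfect elimination order.
-/

namespace SimpleGraph

variable {V : Type*} {G : SimpleGraph V}

theorem isChordal_iff_exists_isChord : G.IsChordal ↔
    ∀ ⦃v : V⦄ (c : G.Walk v v), c.IsCycle → 4 ≤ c.length → ∃ e, c.IsChord e := by
  simp only [IsChordal, Sym2.exists, Walk.isChord_sym2Mk]
  grind

theorem IsChordal.comap {W : Type*} {H : SimpleGraph W} (hG : G.IsChordal) (f : H ↪g G) :
    H.IsChordal := by
  intro v c hc hlen
  obtain ⟨a, b, ha, hb, hab, hnot⟩ :=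
    hG (c.map f.toHom) (hc.map f.injective) (by rwa [Walk.length_map])
  simp only [Walk.support_map, List.mem_map] at ha hb
  obtain ⟨a, ha, rfl⟩ := ha
  obtain ⟨b, hb, rfl⟩ := hb
  refine ⟨a, b, ha, hb, f.map_adj_iff.1 hab, fun h => hnot ?_⟩
  rw [Walk.edges_map]
  exact List.mem_map_of_mem h

namespace Walk

variable {u v : V}

theorem IsCycle.snd_penultimate_notMem_edges {c : G.Walk u u} (hc : c.IsCycle)
    (hlen : 4 ≤ c.length) : s(c.snd, c.penultimate) ∉ c.edges := by
  have hedges : c.edges = s(u, c.snd) :: c.tail.edges := by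
    conv_lhs => rw [← c.cons_tail_eq hc.not_nil]
    rfl
  rw [hedges, List.mem_cons, Sym2.eq_iff]
  rintro ((⟨h, -⟩ | ⟨-, h⟩) | h)
  · exact (c.adj_snd hc.not_nil).ne h.symm
  · exact (c.adj_penultimate hc.not_nil).ne h
  · have h2 := hc.isPath_tail.eq_snd_of_mem_edges h
    rw [snd, getVert_tail] at h2
    have := hc.getVert_injOn ⟨by lia, by lia⟩ ⟨by lia, by lia⟩ h2
    lia

theorem IsCycle.isChord_snd_penultimate {c : G.Walk u u} (hc : c.IsCycle) (hlen : 4 ≤ c.length)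
    (hadj : G.Adj c.snd c.penultimate) : c.IsChord s(c.snd, c.penultimate) :=
  isChord_sym2Mk.2 ⟨hadj, hc.snd_penultimate_notMem_edges hlen,
    c.getVert_mem_support _, c.getVert_mem_support _⟩

theorem isChord_rotate [DecidableEq V] {c : G.Walk u u} {v : V} (hv : v ∈ c.support)
    {e : Sym2 V} : (c.rotate v hv).IsChord e ↔ c.IsChord e := by
  induction e
  simp only [isChord_sym2Mk, mem_support_rotate_iff, (c.rotate_edges v hv).perm.mem_iff]

theorem exists_shorter_of_adj_start {d : V} (p : G.Walk u v) (hd : d ∈ p.support)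
    (had : G.Adj u d) (hne : s(u, d) ∉ p.edges) :
    ∃ q : G.Walk u v, q.support ⊆ p.support ∧ q.length < p.length := by
  classical
  cases p with
  | nil => exact absurd (by simpa using hd) had.ne'
  | @cons _ w _ huw p =>
    have hd : d ∈ p.support := (List.mem_cons.1 hd).resolve_left had.ne'
    have hdw : d ≠ w := by rintro rfl; simp at hne
    refine ⟨cons had (p.dropUntil d hd), ?_, ?_⟩
    · simpa using List.subset_cons_of_subset _ (p.support_dropUntil_subset_support hd)
    · simpa using length_dropUntil_lt_length hd hdw

theorem IsChord.exists_shorter {e : Sym2 V} {p : G.Walk u v} (h : p.IsChord e) :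
    ∃ q : G.Walk u v, q.support ⊆ p.support ∧ q.length < p.length := by
  induction e with | h c d => ?_
  rw [isChord_sym2Mk] at h
  obtain ⟨hcd, hnot, hc, hd⟩ := h
  induction p with
  | nil =>
    obtain rfl : c = _ := by simpa using hc
    exact exists_shorter_of_adj_start _ hd hcd hnot
  | @cons u w v huw p ih =>
    rcases eq_or_ne c u with rfl | hcu
    · exact exists_shorter_of_adj_start _ hd hcd hnot
    rcases eq_or_ne d u with rfl | hdu
    · exact exists_shorter_of_adj_start _ hc hcd.symm (by rwa [Sym2.eq_swap])
    obtain ⟨q, hsub, hlt⟩ :=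
      ih (fun h => hnot (by simp [h])) (by simpa [hcu] using hc) (by simpa [hdu] using hd)
    exact ⟨cons huw q, by simpa using List.cons_subset_cons _ hsub, by simpa using hlt⟩

theorem exists_isPath_isChordless_of_support_subset {T : Set V} (p : G.Walk u v)
    (hp : ∀ w ∈ p.support, w ∈ T) :
    ∃ q : G.Walk u v, q.IsPath ∧ q.IsChordless ∧ ∀ w ∈ q.support, w ∈ T := by
  classical
  obtain ⟨q, hqT, hmin⟩ :=
    exists_minimalFor_of_wellFoundedLT (fun q : G.Walk u v => ∀ w ∈ q.support, w ∈ T) length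
      ⟨p, hp⟩
  have hbT : ∀ w ∈ q.bypass.support, w ∈ T := fun w hw =>
    hqT w (q.support_bypass_subset_support hw)
  refine ⟨q.bypass, q.bypass_isPath, fun e he => ?_, hbT⟩
  obtain ⟨r, hsub, hlt⟩ := he.exists_shorter
  have := hmin (fun w hw => hbT w (hsub hw)) (hlt.le.trans q.length_bypass_le_length)
  have := q.length_bypass_le_length
  lia

theorem IsPath.start_notMem_support_tail {p : G.Walk u v} (hp : p.IsPath) :
    u ∉ p.support.tail := by
  have h := hp.support_nodup
  rw [← cons_tail_support] at h
  exact (List.nodup_cons.1 h).1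

theorem IsPath.isCycle_append_reverse {P Q : G.Walk u v} (hP : P.IsPath) (hQ : Q.IsPath)
    (hPQ : ∀ w ∈ P.support, w ∈ Q.support → w = u ∨ w = v) (hlen : 2 ≤ P.length) :
    (P.append Q.reverse).IsCycle := by
  refine hP.isCycle_append hQ.reverse (fun w hwP hwQ => ?_) (Or.inl hlen)
  have hwQ' : w ∈ Q.support := by simpa using List.mem_of_mem_tail hwQ
  rcases hPQ w (List.mem_of_mem_tail hwP) hwQ' with rfl | rfl
  · exact hP.start_notMem_support_tail hwP
  · exact hQ.reverse.start_notMem_support_tail hwQ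

end Walk

def IsPerfectEliminationOrder (G : SimpleGraph V) (f : V ↪ ℕ) : Prop :=
  ∀ v, G.IsClique {w | G.Adj v w ∧ f w < f v}

theorem IsPerfectEliminationOrder.isChordal {f : V ↪ ℕ} (hf : G.IsPerfectEliminationOrder f) :
    G.IsChordal := by
  classical
  refine isChordal_iff_exists_isChord.2 fun v c hc hlen => ?_
  obtain ⟨m, hm, hmax⟩ := c.support.toFinset.exists_max_image f ⟨v, by simp⟩
  simp only [List.mem_toFinset] at hm hmax
  set d := c.rotate m hm
  have hd : d.IsCycle := hc.rotate hm
  have hlt : ∀ w ∈ d.support, G.Adj m w → f w < f m := fun w hw hmw =>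
    (hmax w ((c.mem_support_rotate_iff m hm).1 hw)).lt_of_ne (f.injective.ne hmw.ne')
  have hsnd := d.adj_snd hd.not_nil
  have hpen := (d.adj_penultimate hd.not_nil).symm
  have hadj : G.Adj d.snd d.penultimate :=
    hf m ⟨hsnd, hlt _ (d.getVert_mem_support _) hsnd⟩
      ⟨hpen, hlt _ (d.getVert_mem_support _) hpen⟩ hd.snd_ne_penultimate
  exact ⟨_, (Walk.isChord_rotate hm).1 <|
    hd.isChord_snd_penultimate (by simpa [d] using hlen) hadj⟩

open Walk in
theorem IsChordal.adj_of_isChordless {x y : V} {A B : Set V} (hG : G.IsChordal) (hxy : x ≠ y)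
    {P Q : G.Walk x y} (hP : P.IsPath) (hQ : Q.IsPath) (hPc : P.IsChordless)
    (hQc : Q.IsChordless) (hPA : ∀ w ∈ P.support, w ∈ insert x (insert y A))
    (hQB : ∀ w ∈ Q.support, w ∈ insert x (insert y B)) (hAB : Disjoint A B)
    (hnadj : ∀ a ∈ A, ∀ b ∈ B, ¬G.Adj a b) : G.Adj x y := by
  by_contra hxy'
  have hPQ : ∀ w ∈ P.support, w ∈ Q.support → w = x ∨ w = y := by
    intro w hwP hwQ
    have hwA := hPA w hwP
    have hwB := hQB w hwQ
    simp only [Set.mem_insert_iff] at hwA hwB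
    grind
  have two_le : ∀ R : G.Walk x y, 2 ≤ R.length := fun R => by
    by_contra! h
    interval_cases hR : R.length
    · exact hxy (eq_of_length_eq_zero hR)
    · exact hxy' (adj_of_length_eq_one hR)
  have hcycle := hP.isCycle_append_reverse hQ hPQ (two_le P)
  obtain ⟨a, b, ha, hb, hab, hnot⟩ :=
    hG _ hcycle (by rw [length_append, length_reverse]; linarith [two_le P, two_le Q])
  simp only [mem_support_append_iff, support_reverse, List.mem_reverse, edges_append,
    edges_reverse, List.mem_append, not_or] at ha hb hnot
  have cross : ∀ a b, G.Adj a b → s(a, b) ∉ P.edges → s(a, b) ∉ Q.edges →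
      a ∈ P.support → b ∈ Q.support → False := by
    intro a b hab hP' hQ' ha hb
    by_cases haQ : a ∈ Q.support
    · exact hQ' (hQc.mem_edges haQ hb hab)
    by_cases hbP : b ∈ P.support
    · exact hP' (hPc.mem_edges ha hbP hab)
    have haA := hPA a ha
    have hbB := hQB b hb
    simp only [Set.mem_insert_iff] at haA hbB
    grind [start_mem_support, end_mem_support]
  rcases ha with ha | ha <;> rcases hb with hb | hb
  · exact hnot.1 (hPc.mem_edges ha hb hab)
  · exact cross a b hab hnot.1 hnot.2 ha hb
  · exact cross b a hab.symm (by rw [Sym2.eq_swap]; exact hnot.1)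
      (by rw [Sym2.eq_swap]; exact hnot.2) hb ha
  · exact hnot.2 (hQc.mem_edges ha hb hab)

section Separators

variable {S : Set V} {a b c : V}

def ReachableAvoiding (G : SimpleGraph V) (S : Set V) (a b : V) : Prop :=
  ∃ p : G.Walk a b, ∀ w ∈ p.support, w ∉ S

namespace ReachableAvoiding

theorem refl (ha : a ∉ S) : G.ReachableAvoiding S a a := ⟨.nil, by simpa⟩

theorem symm : G.ReachableAvoiding S a b → G.ReachableAvoiding S b a
  | ⟨p, hp⟩ => ⟨p.reverse, by simpa using hp⟩

theorem trans : G.ReachableAvoiding S a b → G.ReachableAvoiding S b c →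
    G.ReachableAvoiding S a c
  | ⟨p, hp⟩, ⟨q, hq⟩ => ⟨p.append q, by simp only [Walk.mem_support_append_iff]; grind⟩

theorem notMem_right : G.ReachableAvoiding S a b → b ∉ S
  | ⟨p, hp⟩ => hp b p.end_mem_support

theorem of_mem_support {p : G.Walk a b} (hp : ∀ w ∈ p.support, w ∉ S) {w : V}
    (hw : w ∈ p.support) : G.ReachableAvoiding S a w := by
  classical
  exact ⟨p.takeUntil w hw, fun u hu => hp u (p.support_takeUntil_subset_support hw hu)⟩

theorem step (h : G.ReachableAvoiding S a b) (hbc : G.Adj b c) (hc : c ∉ S) :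
    G.ReachableAvoiding S a c :=
  h.trans ⟨hbc.toWalk, by simp [h.notMem_right, hc]⟩

end ReachableAvoiding

theorem Walk.exists_reachableAvoiding_adj (p : G.Walk a b) (ha : a ∉ S)
    (hp : ∃ x ∈ p.support, x ∈ S) :
    ∃ u x, G.ReachableAvoiding S a u ∧ G.Adj u x ∧ x ∈ S ∧ x ∈ p.support := by
  induction p with
  | nil => simp_all
  | @cons a a' b haa' p ih =>
    by_cases ha' : a' ∈ S
    · exact ⟨a, a', .refl ha, haa', ha', by simp⟩
    obtain ⟨u, x, hu, hux, hx, hxp⟩ := ih ha' (by simpa [ha] using hp)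
    exact ⟨u, x, ((ReachableAvoiding.refl ha).step haa' ha').trans hu, hux, hx, by simp [hxp]⟩

def Separates (G : SimpleGraph V) (S : Set V) (a b : V) : Prop :=
  a ∉ S ∧ b ∉ S ∧ ¬G.ReachableAvoiding S a b

theorem separates_comm : G.Separates S a b ↔ G.Separates S b a := by
  unfold Separates
  grind [ReachableAvoiding.symm]

theorem minimal_separates_comm :
    Minimal (G.Separates · a b) S ↔ Minimal (G.Separates · b a) S := by
  simp only [separates_comm]

theorem separates_compl_pair (hab : a ≠ b) (hnadj : ¬G.Adj a b) : G.Separates {a, b}ᶜ a b := by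
  refine ⟨by simp, by simp, fun ⟨p, hp⟩ => ?_⟩
  have hsnd := p.adj_snd (Walk.not_nil_of_ne hab)
  have := hp _ (p.getVert_mem_support 1)
  simp only [Set.mem_compl_iff, Set.mem_insert_iff, Set.mem_singleton_iff, not_not] at this
  rcases this with h | h
  · exact hsnd.ne h.symm
  · exact hnadj (h ▸ hsnd)

theorem exists_adj_of_minimal_separates (hS : Minimal (G.Separates · a b) S) {x : V}
    (hx : x ∈ S) : ∃ u, G.ReachableAvoiding S a u ∧ G.Adj u x := by
  obtain ⟨ha, hb, hab⟩ := hS.prop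
  have : ¬G.Separates (S \ {x}) a b := hS.not_prop_of_lt (Set.sdiff_singleton_ssubset.2 hx)
  obtain ⟨p, hp⟩ : G.ReachableAvoiding (S \ {x}) a b := by
    by_contra h
    exact this ⟨fun h' => ha h'.1, fun h' => hb h'.1, h⟩
  obtain ⟨u, x', hu, hux', hx', hx'p⟩ := p.exists_reachableAvoiding_adj ha (by
    by_contra! h
    exact hab ⟨p, h⟩)
  obtain rfl : x' = x := by by_contra h; exact hp x' hx'p ⟨hx', h⟩
  exact ⟨u, hu, hux'⟩

theorem exists_isChordless_path_of_minimal_separates (hS : Minimal (G.Separates · a b) S)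
    {x y : V} (hx : x ∈ S) (hy : y ∈ S) :
    ∃ p : G.Walk x y, p.IsPath ∧ p.IsChordless ∧
      ∀ w ∈ p.support, w ∈ insert x (insert y {w | G.ReachableAvoiding S a w}) := by
  obtain ⟨u, hu, hux⟩ := exists_adj_of_minimal_separates hS hx
  obtain ⟨v, hv, hvy⟩ := exists_adj_of_minimal_separates hS hy
  obtain ⟨q, hq⟩ := hu.symm.trans hv
  refine (Walk.cons hux.symm (q.concat hvy)).exists_isPath_isChordless_of_support_subset
    fun w hw => ?_
  simp only [Walk.support_cons, Walk.support_concat, List.mem_cons, List.mem_append,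
    List.not_mem_nil, or_false] at hw
  rcases hw with rfl | hw | rfl
  · exact Set.mem_insert _ _
  · exact Set.mem_insert_of_mem _ (Set.mem_insert_of_mem _ (hu.trans (.of_mem_support hq hw)))
  · exact Set.mem_insert_of_mem _ (Set.mem_insert _ _)

theorem IsChordal.isClique_of_minimal_separates (hG : G.IsChordal)
    (hS : Minimal (G.Separates · a b) S) : G.IsClique S := by
  intro x hx y hy hxy
  obtain ⟨P, hP, hPc, hPA⟩ := exists_isChordless_path_of_minimal_separates hS hx hy
  obtain ⟨Q, hQ, hQc, hQB⟩ :=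
    exists_isChordless_path_of_minimal_separates (minimal_separates_comm.1 hS) hx hy
  have hab := hS.prop.2.2
  refine hG.adj_of_isChordless hxy hP hQ hPc hQc hPA hQB ?_ ?_
  · exact Set.disjoint_left.2 fun w hwa hwb => hab (.trans hwa (.symm hwb))
  · exact fun u (hu : G.ReachableAvoiding S a u) w (hw : G.ReachableAvoiding S b w) huw =>
      hab ((hu.step huw hw.notMem_right).trans hw.symm)

end Separators

def IsSimplicial (G : SimpleGraph V) (v : V) : Prop := G.IsClique (G.neighborSet v)

theorem IsSimplicial.of_induce {s : Set V} {v : s} (hv : (G.induce s).IsSimplicial v)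
    (hs : G.neighborSet v ⊆ s) : G.IsSimplicial v :=
  fun w₁ h₁ w₂ h₂ hne =>
    hv (x := ⟨w₁, hs h₁⟩) (y := ⟨w₂, hs h₂⟩) h₁ h₂ fun h => hne (congrArg Subtype.val h)

theorem IsChordal.exists_isSimplicial_notMem [Finite V] (hG : G.IsChordal) {K : Set V}
    (hK : G.IsClique K) (hKV : Kᶜ.Nonempty) : ∃ v ∉ K, G.IsSimplicial v := by
  induction hn : Nat.card V using Nat.strong_induction_on generalizing V with | _ n ih => ?_
  by_cases hcomplete : ∃ a b : V, a ≠ b ∧ ¬G.Adj a b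
  swap
  · obtain ⟨v, hv⟩ := hKV
    exact ⟨v, hv, fun w₁ _ w₂ _ hne =>
      by_contra fun h => hcomplete ⟨w₁, w₂, hne, h⟩⟩
  obtain ⟨a, b, hab, hnadj⟩ := hcomplete
  obtain ⟨S, -, hS⟩ := exists_minimal_le_of_wellFoundedLT (G.Separates · a b) _
    (separates_compl_pair hab hnadj)
  have hSK := hG.isClique_of_minimal_separates hS
  have side : ∀ {a b : V}, Minimal (G.Separates · a b) S →
      ∃ z, G.ReachableAvoiding S a z ∧ G.IsSimplicial z := by
    intro a b hS
    obtain ⟨ha, hb, hab⟩ := hS.prop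
    set s : Set V := {w | G.ReachableAvoiding S a w} ∪ S
    have hlt : Nat.card s < n := hn ▸ Finite.card_subtype_lt (x := b) (by simp [s, hab, hb])
    obtain ⟨z, hzS, hz⟩ := ih _ hlt (hG.comap (Embedding.induce s))
      (K := Subtype.val ⁻¹' S)
      (isClique_induce_iff.2 (hSK.subset (Set.image_preimage_subset _ _)))
      ⟨⟨a, .inl (.refl ha)⟩, ha⟩ rfl
    have hza : G.ReachableAvoiding S a z := z.2.resolve_right hzS
    refine ⟨z, hza, hz.of_induce fun w hw => ?_⟩
    by_cases hwS : w ∈ S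
    · exact .inr hwS
    · exact .inl (hza.step hw hwS)
  obtain ⟨za, hza, hsa⟩ := side hS
  obtain ⟨zb, hzb, hsb⟩ := side (minimal_separates_comm.1 hS)
  by_cases hzaK : za ∈ K
  · refine ⟨zb, fun hzbK => hS.prop.2.2 ?_, hsb⟩
    have hne : za ≠ zb := fun h => hS.prop.2.2 (hza.trans (h ▸ hzb.symm))
    exact (hza.step (hK hzaK hzbK hne) hzb.notMem_right).trans hzb.symm
  · exact ⟨za, hzaK, hsa⟩

theorem IsSimplicial.exists_isPerfectEliminationOrder [Finite V] {v : V}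
    (hv : G.IsSimplicial v) {f : {w // w ≠ v} ↪ ℕ}
    (hf : (G.induce {w | w ≠ v}).IsPerfectEliminationOrder f) :
    ∃ g, G.IsPerfectEliminationOrder g := by
  classical
  obtain ⟨N, hN⟩ : ∃ N, ∀ w, f w < N := by
    obtain ⟨M, hM⟩ := (Set.finite_range f).bddAbove
    exact ⟨M + 1, fun w => Nat.lt_succ_of_le (hM ⟨w, rfl⟩)⟩
  let g : V ↪ ℕ := (Equiv.optionSubtypeNe v).symm.toEmbedding.trans
    (f.optionElim N fun ⟨w, hw⟩ => (hN w).ne hw)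
  have hgv : g v = N := by simp [g]
  have hgw : ∀ w (hw : w ≠ v), g w = f ⟨w, hw⟩ := fun w hw => by
    simp [g, Equiv.optionSubtypeNe_symm_of_ne hw]
  refine ⟨g, fun u => ?_⟩
  rcases eq_or_ne u v with rfl | hu
  · exact hv.subset fun w hw => hw.1
  have hne_v : ∀ {w}, g w < g u → w ≠ v := fun hw hwv => by
    have := hN ⟨u, hu⟩
    rw [hwv, hgv, hgw u hu] at hw
    lia
  intro w₁ h₁ w₂ h₂ hne
  refine hf ⟨u, hu⟩ (x := ⟨w₁, hne_v h₁.2⟩) (y := ⟨w₂, hne_v h₂.2⟩) ⟨h₁.1, ?_⟩ ⟨h₂.1, ?_⟩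
    (fun h => hne (congrArg Subtype.val h))
  · simpa [hgw _ hu, hgw _ (hne_v h₁.2)] using h₁.2
  · simpa [hgw _ hu, hgw _ (hne_v h₂.2)] using h₂.2

theorem IsChordal.exists_isPerfectEliminationOrder [Finite V] (hG : G.IsChordal) :
    ∃ f, G.IsPerfectEliminationOrder f := by
  induction hn : Nat.card V using Nat.strong_induction_on generalizing V with | _ n ih => ?_
  cases isEmpty_or_nonempty V
  · exact ⟨Function.Embedding.ofIsEmpty, isEmptyElim⟩
  obtain ⟨v, -, hv⟩ := hG.exists_isSimplicial_notMem (K := ∅) (by simp) (by simp)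
  obtain ⟨f, hf⟩ := ih _ (hn ▸ Finite.card_subtype_lt (x := v) (by simp))
    (hG.comap (Embedding.induce {w | w ≠ v})) rfl
  exact hv.exists_isPerfectEliminationOrder hf

end SimpleGraph

theorem chordal_iff_exists_perfect_elimination_ordering_general
    {V : Type*} [Fintype V] (G : SimpleGraph V) :
    G.IsChordal ↔
      ∃ f : V ↪ ℕ, ∀ v : V, G.IsClique {w : V | G.Adj v w ∧ f w < f v} :=
  ⟨SimpleGraph.IsChordal.exists_isPerfectEliminationOrder, fun ⟨_, hf⟩ =>
    SimpleGraph.IsPerfectEliminationOrder.isChordal hf⟩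

/-- A finite graph is chordal iff it admits a perfect elimination ordering:
a linear order of the vertices (an injection into ℕ) such that for each
vertex `v`, the neighbours of `v` preceding `v` form a clique. -/
theorem chordal_iff_exists_perfect_elimination_ordering
    {V : Type*} [Fintype V] [DecidableEq V] (G : SimpleGraph V) :
    G.IsChordal ↔
      ∃ f : V ↪ ℕ, ∀ v : V, G.IsClique {w : V | G.Adj v w ∧ f w < f v} :=
  chordal_iff_exists_perfect_elimination_ordering_general G
end

section
/- Let K be the disjoint union of m points. The number of generators of length ℓ in the set of iterated commutators [u_{k₁},[u_{k₂},…,[u_{k_{ℓ-2}},[u_j,u_i]]…]] with k₁ < k₂ < ⋯ < k_{ℓ-2} < j > i and k_s ≠ i for all s, is (ℓ−1)·C(m, ℓ) for 2 ≤ ℓ ≤ m. -/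
/-!
Inserting `i` into `S` turns a commutator `(S, j, i)` into a triple `(T, j, i)` where
`T = S ∪ {i}` is an `(ℓ - 1)`-set lying below `j` and `i ∈ T` is arbitrary. A pair `(T, j)` with
`T` below `j` is the same as the `ℓ`-set `T ∪ {j}`, from which `j` is recovered as the maximum;
hence there are `C(m, ℓ)` such pairs, each carrying `ℓ - 1` choices of `i`.
-/

open Finset

variable {α : Type*} [LinearOrder α] [Fintype α]

theorem card_filter_forall_lt_eq_choose (k : ℕ) :
    (univ.filter fun x : Finset α × α => #x.1 = k ∧ ∀ a ∈ x.1, a < x.2).card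
      = (Fintype.card α).choose (k + 1) := by
  rw [← card_univ, ← card_powersetCard]
  have hne {U : Finset α} (hU : U ∈ powersetCard (k + 1) univ) : U.Nonempty :=
    card_pos.1 (by rw [mem_powersetCard_univ.1 hU]; exact k.succ_pos)
  refine card_bij' (fun x _ => insert x.2 x.1)
    (fun U hU => (U.erase (U.max' (hne hU)), U.max' (hne hU))) ?_ ?_ ?_ ?_
  · rintro ⟨T, j⟩ hx
    simp only [mem_filter, mem_univ, true_and] at hx
    rw [mem_powersetCard_univ, card_insert_of_notMem fun hj => (hx.2 j hj).false, hx.1]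
  · intro U hU
    simp only [mem_filter, mem_univ, true_and]
    refine ⟨?_, fun a => lt_max'_of_mem_erase_max' U (hne hU)⟩
    rw [card_erase_of_mem (max'_mem _ _), mem_powersetCard_univ.1 hU, Nat.add_sub_cancel]
  · rintro ⟨T, j⟩ hx
    simp only [mem_filter, mem_univ, true_and] at hx
    have hmax : (insert j T).max' (insert_nonempty j T) = j :=
      (max'_eq_iff _ _ j).2 ⟨mem_insert_self j T, forall_mem_insert _ _ _ |>.2
        ⟨le_rfl, fun a ha => (hx.2 a ha).le⟩⟩
    simp only [hmax, erase_insert fun hj => (hx.2 j hj).false]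
  · intro U hU
    exact insert_erase (max'_mem U (hne hU))

theorem card_filter_mem_forall_lt_eq_mul_choose (k : ℕ) :
    (univ.filter fun x : Finset α × α × α =>
        #x.1 = k ∧ (∀ a ∈ x.1, a < x.2.1) ∧ x.2.2 ∈ x.1).card
      = k * (Fintype.card α).choose (k + 1) := by
  set s := univ.filter fun x : Finset α × α × α =>
    #x.1 = k ∧ (∀ a ∈ x.1, a < x.2.1) ∧ x.2.2 ∈ x.1
  set t := univ.filter fun x : Finset α × α => #x.1 = k ∧ ∀ a ∈ x.1, a < x.2
  have hst : ∀ x ∈ s, (x.1, x.2.1) ∈ t := by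
    intro x hx
    simp only [s, t, mem_filter, mem_univ, true_and] at hx ⊢
    exact ⟨hx.1, hx.2.1⟩
  have hfiber : ∀ y ∈ t, #{x ∈ s | (x.1, x.2.1) = y} = k := by
    rintro ⟨T, j⟩ hy
    simp only [t, mem_filter, mem_univ, true_and] at hy
    have hfiber_eq : {x ∈ s | (x.1, x.2.1) = (T, j)} =
        T.map ⟨fun i => (T, j, i), fun i i' h => by simpa using h⟩ := by
      ext ⟨S, j', i⟩
      simp only [s, mem_filter, mem_univ, true_and, mem_map, Prod.mk.injEq]
      constructor
      · rintro ⟨⟨-, -, hi⟩, rfl, rfl⟩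
        exact ⟨i, hi, rfl⟩
      · rintro ⟨i, hi, rfl, rfl, rfl⟩
        exact ⟨⟨hy.1, hy.2, hi⟩, rfl, rfl⟩
    rw [hfiber_eq, card_map, hy.1]
  rw [card_eq_sum_card_fiberwise hst, sum_const_nat hfiber, card_filter_forall_lt_eq_choose,
    mul_comm]

theorem card_filter_notMem_lt_eq_card_filter_mem (k : ℕ) :
    (univ.filter fun x : Finset α × α × α =>
        #x.1 = k ∧ (∀ a ∈ x.1, a < x.2.1) ∧ x.2.2 ∉ x.1 ∧ x.2.2 < x.2.1).card
      = (univ.filter fun x : Finset α × α × α =>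
        #x.1 = k + 1 ∧ (∀ a ∈ x.1, a < x.2.1) ∧ x.2.2 ∈ x.1).card := by
  refine card_nbij' (fun x => (insert x.2.2 x.1, x.2)) (fun x => (x.1.erase x.2.2, x.2))
      ?_ ?_ ?_ ?_ <;>
    simp only [Set.MapsTo, Set.LeftInvOn, coe_filter, mem_univ, true_and, Set.mem_ofPred_eq]
  · rintro ⟨S, j, i⟩ ⟨hcard, hlt, hiS, hij⟩
    refine ⟨by rw [card_insert_of_notMem hiS, hcard], ?_, mem_insert_self i S⟩
    exact (forall_mem_insert _ _ _).2 ⟨hij, hlt⟩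
  · rintro ⟨T, j, i⟩ ⟨hcard, hlt, hiT⟩
    exact ⟨by rw [card_erase_of_mem hiT, hcard, Nat.add_sub_cancel],
      fun a ha => hlt a (mem_of_mem_erase ha), notMem_erase i T, hlt i hiT⟩
  · rintro ⟨S, j, i⟩ ⟨-, -, hiS, -⟩
    simp [erase_insert hiS]
  · rintro ⟨T, j, i⟩ ⟨-, -, hiT⟩
    simp [insert_erase hiT]

theorem count_iterated_commutators_general (m ℓ : ℕ) (h2 : 2 ≤ ℓ) :
    ((Finset.univ : Finset (Finset (Fin m) × Fin m × Fin m)).filter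
        (fun x => x.1.card = ℓ - 2 ∧ (∀ k ∈ x.1, k < x.2.1) ∧
          x.2.2 ∉ x.1 ∧ x.2.2 < x.2.1)).card
      = (ℓ - 1) * Nat.choose m ℓ := by
  have h := (card_filter_notMem_lt_eq_card_filter_mem (α := Fin m) (ℓ - 2)).trans
    (card_filter_mem_forall_lt_eq_mul_choose (ℓ - 2 + 1))
  rw [Fintype.card_fin, show ℓ - 2 + 1 = ℓ - 1 by omega, show ℓ - 1 + 1 = ℓ by omega] at h
  -- the decidability instances of the two filters differ, which `convert` absorbs
  convert h

/-- The number of iterated commutators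
`[u_{k₁},[u_{k₂},…,[u_{k_{ℓ-2}},[u_j,u_i]]…]]` of length `ℓ` on `m` letters
with `k₁ < k₂ < ⋯ < k_{ℓ-2} < j > i` and `k_s ≠ i` for all `s`, is
`(ℓ−1)·C(m,ℓ)`.  A commutator is encoded by the set `S = {k₁ < ⋯ < k_{ℓ-2}}`
together with `j` and `i`. -/
theorem count_iterated_commutators (m ℓ : ℕ) (h2 : 2 ≤ ℓ) (hm : ℓ ≤ m) :
    ((Finset.univ : Finset (Finset (Fin m) × Fin m × Fin m)).filter
        (fun x => x.1.card = ℓ - 2 ∧ (∀ k ∈ x.1, k < x.2.1) ∧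
          x.2.2 ∉ x.1 ∧ x.2.2 < x.2.1)).card
      = (ℓ - 1) * Nat.choose m ℓ :=
  count_iterated_commutators_general m ℓ h2
end

section
/- In the free graded Lie algebra (over a field of characteristic ≠ 2,3) on generators u₁,…,u₅ of degree 1 subject to the relations [u_i, u_j] = 0 whenever {i,j} is an edge of the 5-cycle (edges {1,2},{2,3},{3,4},{4,5},{5,1}) and [u_i,u_i]=0 for all i, the element Σ_{i=1}^{5} ±[a_i, b_i] vanishes for a suitable choice of signs, where a₁=[u₃,u₁], a₂=[u₄,u₁], a₃=[u₄,u₂], a₄=[u₅,u₂], a₅=[u₅,u₃], b₁=[u₄,[u₅,u₂]], b₂=[u₃,[u₅,u₂]], b₃=[u₁,[u₅,u₃]], b₄=[u₃,[u₄,u₁]], b₅=[u₂,[u₄,u₁]]. -/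
/-- The defining relations of the graph product algebra of the 5-cycle:
`uᵢ² = 0` for all `i`, and `uᵢuⱼ + uⱼuᵢ = 0` for edges `{i, i+1}` (mod 5). -/
def pentRel (k : Type) [Field k] :
    FreeAlgebra k (Fin 5) → FreeAlgebra k (Fin 5) → Prop :=
  fun x y => y = 0 ∧
    ((∃ i : Fin 5, x = FreeAlgebra.ι k i * FreeAlgebra.ι k i) ∨
     (∃ i : Fin 5, x = FreeAlgebra.ι k i * FreeAlgebra.ι k (i + 1)
        + FreeAlgebra.ι k (i + 1) * FreeAlgebra.ι k i))

/-- The graph product algebra `T⟨u₁,…,u₅⟩/(uᵢ²=0; uᵢuⱼ+uⱼuᵢ=0 for edges)`. -/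
def PentAlg (k : Type) [Field k] := RingQuot (pentRel k)

noncomputable instance (k : Type) [Field k] : Ring (PentAlg k) :=
  inferInstanceAs (Ring (RingQuot (pentRel k)))

noncomputable instance (k : Type) [Field k] : Algebra k (PentAlg k) :=
  inferInstanceAs (Algebra k (RingQuot (pentRel k)))

/-- The degree-1 generators `u₁,…,u₅` (indexed `0,…,4`). -/
noncomputable def pu (k : Type) [Field k] (i : Fin 5) : PentAlg k :=
  RingQuot.mkAlgHom k (pentRel k) (FreeAlgebra.ι k i)

/-- Graded commutator of two degree-1 elements: `[x,y] = xy + yx`. -/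
noncomputable def c11 (k : Type) [Field k] (x y : PentAlg k) : PentAlg k :=
  x * y + y * x

/-- Graded commutator of a degree-1 and a degree-2 element: `[x,y] = xy − yx`. -/
noncomputable def c12 (k : Type) [Field k] (x y : PentAlg k) : PentAlg k :=
  x * y - y * x

/-- Graded commutator of a degree-2 and a degree-3 element: `[x,y] = xy − yx`. -/
noncomputable def c23 (k : Type) [Field k] (x y : PentAlg k) : PentAlg k :=
  x * y - y * x

/-- `a₁=[u₃,u₁], a₂=[u₄,u₁], a₃=[u₄,u₂], a₄=[u₅,u₂], a₅=[u₅,u₃]` (0-indexed). -/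
noncomputable def aGen (k : Type) [Field k] : Fin 5 → PentAlg k :=
  ![c11 k (pu k 2) (pu k 0), c11 k (pu k 3) (pu k 0), c11 k (pu k 3) (pu k 1),
    c11 k (pu k 4) (pu k 1), c11 k (pu k 4) (pu k 2)]

/-- `b₁=[u₄,[u₅,u₂]], b₂=[u₃,[u₅,u₂]], b₃=[u₁,[u₅,u₃]], b₄=[u₃,[u₄,u₁]],
`b₅=[u₂,[u₄,u₁]]` (0-indexed). -/
noncomputable def bGen (k : Type) [Field k] : Fin 5 → PentAlg k :=
  ![c12 k (pu k 3) (c11 k (pu k 4) (pu k 1)),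
    c12 k (pu k 2) (c11 k (pu k 4) (pu k 1)),
    c12 k (pu k 0) (c11 k (pu k 4) (pu k 2)),
    c12 k (pu k 2) (c11 k (pu k 3) (pu k 0)),
    c12 k (pu k 1) (c11 k (pu k 3) (pu k 0))]

/-! Expanding the graded commutators writes each `[aᵢ, bᵢ]` as a signed sum of words in which
every generator occurs exactly once. Modulo the relations, letters adjacent in the pentagon
anticommute, so each such word equals `±` the lexicographically least word obtained from it by
such swaps (its normal form in the partially commutative monoid). After normalisation the
chosen signed sum cancels term by term. -/

open SimpleGraph

section Anticommuting

variable {R : Type*} [Ring R] {x y z : R}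

theorem mul_left_anticomm (h : x * y = -(y * x)) (w : R) :
    x * (y * w) = -(y * (x * w)) := by
  rw [← mul_assoc, h, neg_mul, mul_assoc]

theorem mul_mul_rotate_of_anticomm (hxz : x * z = -(z * x)) (hyz : y * z = -(z * y)) :
    x * (y * z) = z * (x * y) := by
  rw [hyz, mul_neg, ← mul_assoc, hxz, neg_mul, neg_neg, mul_assoc]

theorem mul_mul_mul_rotate_of_anticomm (hxz : x * z = -(z * x)) (hyz : y * z = -(z * y))
    (w : R) : x * (y * (z * w)) = z * (x * (y * w)) := by
  rw [← mul_assoc y, ← mul_assoc x, mul_mul_rotate_of_anticomm hxz hyz, mul_assoc, mul_assoc]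

end Anticommuting

namespace PentAlg

variable {k : Type} [Field k]

theorem pu_mul_pu_succ_add_pu_succ_mul_pu (i : Fin 5) :
    pu k i * pu k (i + 1) + pu k (i + 1) * pu k i = 0 := by
  have h := RingQuot.mkAlgHom_rel k (s := pentRel k) ⟨rfl, Or.inr ⟨i, rfl⟩⟩
  simp only [map_add, map_mul, map_zero] at h
  exact h

theorem pu_mul_pu_of_adj {i j : Fin 5} (h : (cycleGraph 5).Adj i j) :
    pu k i * pu k j = -(pu k j * pu k i) := by
  rcases cycleGraph_adj.mp h with h | h
  · obtain rfl : i = j + 1 := sub_eq_iff_eq_add'.mp h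
    exact eq_neg_of_add_eq_zero_right (pu_mul_pu_succ_add_pu_succ_mul_pu j)
  · obtain rfl : j = i + 1 := sub_eq_iff_eq_add'.mp h
    exact eq_neg_of_add_eq_zero_left (pu_mul_pu_succ_add_pu_succ_mul_pu i)

variable (k) in
theorem signed_sum_c23_aGen_bGen_eq_zero :
    c23 k (aGen k 0) (bGen k 0) - c23 k (aGen k 1) (bGen k 1) - c23 k (aGen k 2) (bGen k 2)
      + c23 k (aGen k 3) (bGen k 3) - c23 k (aGen k 4) (bGen k 4) = 0 := by
  -- The guards `j < i` and `l < i` make every rule decrease words lexicographically, so `simp`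
  -- terminates; the rotations resolve the critical overlaps of the swaps.
  have swap {i j : Fin 5} (_ : j < i) (h : (cycleGraph 5).Adj i j) :
      pu k i * pu k j = -(pu k j * pu k i) :=
    pu_mul_pu_of_adj h
  have swap_mul {i j : Fin 5} (_ : j < i) (h : (cycleGraph 5).Adj i j) (w : PentAlg k) :
      pu k i * (pu k j * w) = -(pu k j * (pu k i * w)) :=
    mul_left_anticomm (pu_mul_pu_of_adj h) w
  have rotate {i j l : Fin 5} (_ : l < i) (hi : (cycleGraph 5).Adj i l)
      (hj : (cycleGraph 5).Adj j l) : pu k i * (pu k j * pu k l) = pu k l * (pu k i * pu k j) :=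
    mul_mul_rotate_of_anticomm (pu_mul_pu_of_adj hi) (pu_mul_pu_of_adj hj)
  have rotate_mul {i j l : Fin 5} (_ : l < i) (hi : (cycleGraph 5).Adj i l)
      (hj : (cycleGraph 5).Adj j l) (w : PentAlg k) :
      pu k i * (pu k j * (pu k l * w)) = pu k l * (pu k i * (pu k j * w)) :=
    mul_mul_mul_rotate_of_anticomm (pu_mul_pu_of_adj hi) (pu_mul_pu_of_adj hj) w
  simp only [aGen, bGen, Matrix.cons_val, c23, c12, c11]
  simp (disch := decide) only [mul_add, add_mul, mul_sub, sub_mul, mul_neg, neg_mul, mul_assoc,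
    swap, swap_mul, rotate, rotate_mul]
  abel

end PentAlg

theorem pentagon_one_relation_general (k : Type) [Field k] :
    ∃ ε : Fin 5 → k, (∀ i, ε i = 1 ∨ ε i = -1) ∧
      ∑ i : Fin 5, ε i • c23 k (aGen k i) (bGen k i) = 0 := by
  refine ⟨![1, -1, -1, 1, -1], fun i => by fin_cases i <;> simp, ?_⟩
  simpa [Fin.sum_univ_five, sub_eq_add_neg] using PentAlg.signed_sum_c23_aGen_bGen_eq_zero k

/-- In the graph product algebra of the 5-cycle over a field of characteristic
≠ 2, 3, the element `∑ ±[aᵢ,bᵢ]` vanishes for a suitable choice of signs. -/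
theorem pentagon_one_relation (k : Type) [Field k]
    (h2 : (2 : k) ≠ 0) (h3 : (3 : k) ≠ 0) :
    ∃ ε : Fin 5 → k, (∀ i, ε i = 1 ∨ ε i = -1) ∧
      ∑ i : Fin 5, ε i • c23 k (aGen k i) (bGen k i) = 0 :=
  pentagon_one_relation_general k
end
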